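/- arXiv:math/0010197 — 2 statements merged into one kernel-verified Lean document; each statement's English description precedes it below -/
import Mathlib

section
/- The Halphen system ẋ_1 = x_3x_2 - x_1x_3 - x_1x_2, ẋ_2 = x_1x_3 - x_2x_1 - x_2x_3, ẋ_3 = x_2x_1 - x_3x_2 - x_3x_1 admits no nonconstant polynomial first integral: every polynomial F ∈ ℂ[x_1,x_2,x_3] satisfying (x_3x_2 - x_1x_3 - x_1x_2)∂F/∂x_1 + (x_1x_3 - x_2x_1 - x_2x_3)∂F/∂x_2 + (x_2x_1 - x_3x_2 - x_3x_1)∂F/∂x_3 = 0 is a constant. -/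
/-!
The Halphen field `D` raises degrees by one, so every homogeneous component of a first
integral is again a first integral, and it suffices to show that a homogeneous `G` of degree
`d` with `D G = c x₂ G` (`c : ℕ`) vanishes unless `d = c = 0`. The plane `x₀ = x₁` is
invariant. Write `P = G(x, x, z)` as a polynomial in `x` over `R[z]`; Euler's identity turns
the restricted equation into an ODE for `P` alone, whose two lowest-order coefficients force
`c = 0` and `ord P = 2d`, which is impossible for `P ≠ 0` since `deg P ≤ d`. Hence `x₀ - x₁`
divides `G`, and since `D (x₀ - x₁) = -2 x₂ (x₀ - x₁)` the cofactor satisfies the same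
equation with `(d - 1, c + 2)`; induct on `d`.
-/

open scoped Polynomial

namespace Polynomial

lemma X_mul_derivative_X_pow_mul {R : Type*} [CommSemiring R] (k : ℕ) (Q : R[X]) :
    X * derivative (X ^ k * Q) = X ^ k * ((k : R[X]) * Q + X * derivative Q) := by
  rcases k with _ | k
  · simp
  · rw [derivative_mul, derivative_X_pow, Nat.add_sub_cancel, ← C_eq_natCast]
    ring

end Polynomial

namespace Halphen

open Polynomial in
lemma eq_zero_of_plane_equation {R : Type*} [CommRing R] [IsDomain R] [CharZero R]
    {z : R} (hz : z ≠ 0) {d c : ℕ} (hdc : 0 < d + c) {P : R[X]} (hP : P.natDegree ≤ d)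
    (h : -X ^ 2 * C z * derivative P + (X ^ 2 - 2 * X * C z) * ((d : R[X]) * P - X * derivative P)
      = (c : R[X]) * C z ^ 2 * P) :
    P = 0 := by
  by_contra hP0
  obtain ⟨Q, hPQ, hQ⟩ := P.exists_eq_pow_rootMultiplicity_mul_and_not_dvd hP0 0
  set k := P.rootMultiplicity 0
  rw [C_0, sub_zero] at hPQ hQ
  have hQ0 : Q.eval 0 ≠ 0 := fun h0 => hQ (X_dvd_iff.mpr (by rwa [coeff_zero_eq_eval_zero]))
  have hkd : k ≤ d := by
    have := natDegree_le_of_dvd (Dvd.intro Q hPQ.symm) hP0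
    rw [natDegree_X_pow] at this
    omega
  have hXP' : X * derivative P = X ^ k * ((k : R[X]) * Q + X * derivative Q) := by
    rw [hPQ, X_mul_derivative_X_pow_mul]
  set T := -C z * ((k : R[X]) * Q + X * derivative Q)
    + (X - 2 * C z) * (((d : R[X]) - (k : R[X])) * Q - X * derivative Q) with hT_def
  have hS : X ^ k * (X * T - (c : R[X]) * C z ^ 2 * Q) = 0 := by
    linear_combination h + X ^ (k + 1) * hT_def + (X * C z + X ^ 2 - 2 * X * C z) * hXP'
      + ((c : R[X]) * C z ^ 2 - (d : R[X]) * (X ^ 2 - 2 * X * C z)) * hPQ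
  replace hS := (mul_eq_zero.mp hS).resolve_left (pow_ne_zero _ X_ne_zero)
  have hc : c = 0 := by
    have := congrArg (eval 0) hS
    simpa [hz, hQ0] using this
  have hT : T = 0 := by
    simpa [hc, X_ne_zero] using hS
  have hk : k = 2 * d := by
    have := congrArg (eval 0) hT
    simp only [T, eval_add, eval_sub, eval_mul, eval_neg, eval_C, eval_X, eval_natCast,
      eval_ofNat, eval_zero, zero_mul, sub_zero, add_zero, zero_sub] at this
    have hk' : (((2 * d : ℕ) : R) - k) * (z * Q.eval 0) = 0 := by
      push_cast
      linear_combination -this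
    exact_mod_cast (sub_eq_zero.mp ((mul_eq_zero.mp hk').resolve_right (mul_ne_zero hz hQ0))).symm
  omega

end Halphen

open MvPolynomial

namespace MvPolynomial

attribute [local instance] MvPolynomial.gradedAlgebra

variable {σ R : Type*}

section CommSemiring

variable [CommSemiring R]

lemma homogeneousComponent_map_of_isHomogeneous {k : ℕ}
    (L : MvPolynomial σ R →ₗ[R] MvPolynomial σ R)
    (hL : ∀ n p, p.IsHomogeneous n → (L p).IsHomogeneous (n + k))
    (n : ℕ) (F : MvPolynomial σ R) :
    homogeneousComponent (n + k) (L F) = L (homogeneousComponent n F) := by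
  conv_lhs => rw [← sum_homogeneousComponent F, map_sum, map_sum]
  have hL' : ∀ j, homogeneousComponent (n + k) (L (homogeneousComponent j F)) =
      if j = n then L (homogeneousComponent n F) else 0 := by
    intro j
    rw [homogeneousComponent_of_mem (hL j _ (homogeneousComponent_isHomogeneous j F))]
    by_cases hj : j = n
    · simp [hj]
    · rw [if_neg (by omega), if_neg hj]
  simp only [hL', Finset.sum_ite_eq', Finset.mem_range]
  split_ifs with hn
  · rfl
  · rw [homogeneousComponent_eq_zero n F (by omega), map_zero]

lemma eq_C_of_homogeneousComponent_succ_eq_zero {F : MvPolynomial σ R}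
    (h : ∀ n, homogeneousComponent (n + 1) F = 0) : F = C (coeff 0 F) := by
  classical
  ext d
  have hF : coeff d F = coeff d (homogeneousComponent d.degree F) := by
    rw [coeff_homogeneousComponent, if_pos rfl]
  rw [hF, coeff_C]
  rcases Nat.eq_zero_or_eq_succ_pred d.degree with hd | hd
  · obtain rfl : d = 0 := (Finsupp.degree_eq_zero_iff d).mp hd
    simp [homogeneousComponent_zero]
  · rw [hd, h, coeff_zero, if_neg]
    rintro rfl
    simp at hd

variable [Fintype σ]

noncomputable def vectorField (f : σ → MvPolynomial σ R) :
    Derivation R (MvPolynomial σ R) (MvPolynomial σ R) :=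
  ∑ i, f i • pderiv i

lemma vectorField_apply (f : σ → MvPolynomial σ R) (p : MvPolynomial σ R) :
    vectorField f p = ∑ i, f i * pderiv i p := by
  rw [vectorField, ← Derivation.coeFnAddMonoidHom_apply, map_sum, Finset.sum_apply]
  rfl

lemma vectorField_X [DecidableEq σ] (f : σ → MvPolynomial σ R) (i : σ) :
    vectorField f (X i) = f i := by
  simp [vectorField_apply, pderiv_X, Pi.single_apply]

lemma IsHomogeneous.vectorField {f : σ → MvPolynomial σ R} {k n : ℕ}
    (hf : ∀ i, (f i).IsHomogeneous (k + 1)) {p : MvPolynomial σ R} (hp : p.IsHomogeneous n) :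
    (vectorField f p).IsHomogeneous (n + k) := by
  rw [vectorField_apply]
  refine IsHomogeneous.sum _ _ _ fun i _ => ?_
  rcases Nat.eq_zero_or_eq_succ_pred n with rfl | hn
  · rw [totalDegree_eq_zero_iff_eq_C.mp (Nat.le_zero.mp hp.totalDegree_le),
      pderiv_C, mul_zero]
    exact isHomogeneous_zero _ _ _
  · convert (hf i).mul hp.pderiv using 1
    omega

lemma homogeneousComponent_vectorField {f : σ → MvPolynomial σ R} {k : ℕ}
    (hf : ∀ i, (f i).IsHomogeneous (k + 1)) (n : ℕ) (F : MvPolynomial σ R) :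
    homogeneousComponent (n + k) (vectorField f F) = vectorField f (homogeneousComponent n F) :=
  homogeneousComponent_map_of_isHomogeneous (vectorField f).toLinearMap
    (fun _ _ hp => hp.vectorField hf) n F

end CommSemiring

lemma homogeneousComponent_add_of_isHomogeneous_mul [CommSemiring R] {p : MvPolynomial σ R}
    {m : ℕ} (hp : p.IsHomogeneous m) (n : ℕ) (q : MvPolynomial σ R) :
    homogeneousComponent (m + n) (p * q) = p * homogeneousComponent n q := by
  have h := DirectSum.coe_decompose_mul_of_left_mem_of_le (homogeneousSubmodule σ R)
    (b := q) ((mem_homogeneousSubmodule m p).mpr hp) (Nat.le_add_right m n)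
  simpa only [Nat.add_sub_cancel_left, DirectSum.decompose, Equiv.coe_fn_mk,
    decomposition.decompose'_apply] using h

lemma IsHomogeneous.of_mul_left [CommRing R] [IsDomain R] {p q : MvPolynomial σ R} {m n : ℕ}
    (hp : p.IsHomogeneous m) (hp0 : p ≠ 0) (hpq : (p * q).IsHomogeneous (m + n)) :
    q.IsHomogeneous n := by
  intro d hd
  change Finsupp.weight (fun _ => 1) d = n
  rw [← Finsupp.degree_eq_weight_one (R := ℕ)]
  by_contra hne
  have hcomp : homogeneousComponent d.degree q ≠ 0 := by
    intro h0
    apply hd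
    classical
    simpa [coeff_homogeneousComponent] using congrArg (coeff d) h0
  apply hcomp
  have := homogeneousComponent_add_of_isHomogeneous_mul hp d.degree q
  rw [homogeneousComponent_of_mem hpq, if_neg (by omega)] at this
  exact (mul_eq_zero.mp this.symm).resolve_left hp0

lemma rename_cons_eq_eval_finSuccEquiv [CommSemiring R] {n : ℕ}
    (p : MvPolynomial (Fin (n + 2)) R) :
    rename (Fin.cons 0 id) p = (finSuccEquiv R (n + 1) p).eval (X 0) := by
  induction p using MvPolynomial.induction_on with
  | C a => simp [finSuccEquiv_apply]
  | add p q hp hq => simp only [map_add, Polynomial.eval_add, hp, hq]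
  | mul_X p i hp =>
    simp only [map_mul, Polynomial.eval_mul, hp, rename_X]
    congr 1
    refine Fin.cases ?_ (fun j => ?_) i
    · rw [finSuccEquiv_X_zero, Polynomial.eval_X, Fin.cons_zero]
    · rw [finSuccEquiv_X_succ, Polynomial.eval_C, Fin.cons_succ, id]

lemma X_zero_sub_X_one_dvd [CommRing R] {n : ℕ} {p : MvPolynomial (Fin (n + 2)) R}
    (hp : rename (Fin.cons 0 id) p = 0) : X 0 - X 1 ∣ p := by
  have hroot : (finSuccEquiv R (n + 1) p).IsRoot (X 0) := by
    rw [Polynomial.IsRoot, ← rename_cons_eq_eval_finSuccEquiv, hp]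
  obtain ⟨q, hq⟩ := Polynomial.dvd_iff_isRoot.mpr hroot
  refine ⟨(finSuccEquiv R (n + 1)).symm q, (finSuccEquiv R (n + 1)).injective ?_⟩
  rw [map_mul, AlgEquiv.apply_symm_apply, map_sub, finSuccEquiv_X_zero, hq]
  rw [show (1 : Fin (n + 2)) = Fin.succ 0 from rfl, finSuccEquiv_X_succ]

end MvPolynomial

namespace Halphen

variable {R : Type*} [CommRing R]

noncomputable def halphen : Fin 3 → MvPolynomial (Fin 3) R :=
  ![X 2 * X 1 - X 0 * X 2 - X 0 * X 1,
    X 0 * X 2 - X 1 * X 0 - X 1 * X 2,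
    X 1 * X 0 - X 2 * X 1 - X 2 * X 0]

lemma isHomogeneous_halphen (i : Fin 3) :
    (halphen i : MvPolynomial (Fin 3) R).IsHomogeneous 2 := by
  have h (j k : Fin 3) : (X j * X k : MvPolynomial (Fin 3) R).IsHomogeneous 2 :=
    (isHomogeneous_X R j).mul (isHomogeneous_X R k)
  fin_cases i
  · exact ((h 2 1).sub (h 0 2)).sub (h 0 1)
  · exact ((h 0 2).sub (h 1 0)).sub (h 1 2)
  · exact ((h 1 0).sub (h 2 1)).sub (h 2 0)

lemma vectorField_halphen_apply (p : MvPolynomial (Fin 3) R) :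
    vectorField halphen p = (X 2 * X 1 - X 0 * X 2 - X 0 * X 1) * pderiv 0 p
        + (X 0 * X 2 - X 1 * X 0 - X 1 * X 2) * pderiv 1 p
        + (X 1 * X 0 - X 2 * X 1 - X 2 * X 0) * pderiv 2 p := by
  simp [vectorField_apply, Fin.sum_univ_three, halphen]

lemma vectorField_halphen_X_zero_sub_X_one :
    vectorField halphen (X 0 - X 1 : MvPolynomial (Fin 3) R) = -2 * X 2 * (X 0 - X 1) := by
  simp only [map_sub, vectorField_X, halphen, Matrix.cons_val_zero, Matrix.cons_val_one]
  ring

/-- `G ↦ G(x, x, z)`, as a polynomial in `x` over `R[z]` (with `z = X 0`). -/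
noncomputable def restrictDiag : MvPolynomial (Fin 3) R →ₐ[R] (MvPolynomial (Fin 1) R)[X] :=
  (finSuccEquiv R 1 : MvPolynomial (Fin 2) R →ₐ[R] _).comp (rename (Fin.cons 0 id))

lemma restrictDiag_apply (p : MvPolynomial (Fin 3) R) :
    restrictDiag p = finSuccEquiv R 1 (rename (Fin.cons 0 id) p) :=
  rfl

@[simp] lemma restrictDiag_X_zero : restrictDiag (X 0 : MvPolynomial (Fin 3) R) = Polynomial.X := by
  rw [restrictDiag_apply, rename_X, Fin.cons_zero]
  exact finSuccEquiv_X_zero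

@[simp] lemma restrictDiag_X_one : restrictDiag (X 1 : MvPolynomial (Fin 3) R) = Polynomial.X := by
  rw [restrictDiag_apply, rename_X, show (Fin.cons 0 id : Fin 3 → Fin 2) 1 = 0 from rfl]
  exact finSuccEquiv_X_zero

@[simp] lemma restrictDiag_X_two :
    restrictDiag (X 2 : MvPolynomial (Fin 3) R) = Polynomial.C (X 0) := by
  rw [restrictDiag_apply, rename_X, show (Fin.cons 0 id : Fin 3 → Fin 2) 2 = Fin.succ 0 from rfl]
  exact finSuccEquiv_X_succ

lemma derivative_restrictDiag (p : MvPolynomial (Fin 3) R) :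
    Polynomial.derivative (restrictDiag p) = restrictDiag (pderiv 0 p + pderiv 1 p) := by
  induction p using MvPolynomial.induction_on with
  | C a => simp [restrictDiag_apply, finSuccEquiv_apply]
  | add p q hp hq => simp only [map_add, hp, hq]; ring
  | mul_X p i hp =>
    simp only [map_mul, Polynomial.derivative_mul, hp, pderiv_mul, map_add]
    fin_cases i <;>
      simp only [Fin.zero_eta, Fin.mk_one, Fin.reduceFinMk, restrictDiag_X_zero, restrictDiag_X_one,
        restrictDiag_X_two, Polynomial.derivative_X, Polynomial.derivative_C, pderiv_X,
        Pi.single_eq_same, Pi.single_eq_of_ne, ne_eq, Fin.reduceEq, not_false_eq_true, map_one,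
        map_zero] <;>
      ring

lemma natDegree_restrictDiag_le (p : MvPolynomial (Fin 3) R) :
    (restrictDiag p).natDegree ≤ p.totalDegree := by
  rw [restrictDiag_apply, natDegree_finSuccEquiv]
  exact (degreeOf_le_totalDegree _ 0).trans (totalDegree_rename_le _ p)

lemma restrictDiag_plane_equation {G : MvPolynomial (Fin 3) R} {d c : ℕ}
    (hG : G.IsHomogeneous d) (h : vectorField halphen G = (c : MvPolynomial (Fin 3) R) * X 2 * G) :
    -(Polynomial.X : (MvPolynomial (Fin 1) R)[X]) ^ 2 * Polynomial.C (X 0)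
        * Polynomial.derivative (restrictDiag G)
      + (Polynomial.X ^ 2 - 2 * Polynomial.X * Polynomial.C (X 0))
        * ((d : (MvPolynomial (Fin 1) R)[X]) * restrictDiag G
          - Polynomial.X * Polynomial.derivative (restrictDiag G))
      = (c : (MvPolynomial (Fin 1) R)[X]) * Polynomial.C (X 0) ^ 2 * restrictDiag G := by
  have hE := congrArg restrictDiag hG.sum_X_mul_pderiv
  have hH := congrArg restrictDiag ((vectorField_halphen_apply G).symm.trans h)
  simp only [Fin.sum_univ_three, map_add, map_sub, map_mul, map_natCast,
    restrictDiag_X_zero, restrictDiag_X_one, restrictDiag_X_two, nsmul_eq_mul] at hE hH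
  rw [derivative_restrictDiag, map_add]
  linear_combination Polynomial.C (X 0) * hH
    - (Polynomial.X ^ 2 - 2 * Polynomial.X * Polynomial.C (X 0)) * hE

variable [IsDomain R] [CharZero R]

lemma restrictDiag_eq_zero {G : MvPolynomial (Fin 3) R} {d c : ℕ}
    (hG : G.IsHomogeneous d) (h : vectorField halphen G = (c : MvPolynomial (Fin 3) R) * X 2 * G)
    (hdc : 0 < d + c) :
    restrictDiag G = 0 :=
  eq_zero_of_plane_equation (X_ne_zero 0) hdc
    ((natDegree_restrictDiag_le G).trans hG.totalDegree_le) (restrictDiag_plane_equation hG h)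

theorem eq_zero_of_vectorField_halphen_eq {d c : ℕ} {G : MvPolynomial (Fin 3) R}
    (hG : G.IsHomogeneous d) (h : vectorField halphen G = (c : MvPolynomial (Fin 3) R) * X 2 * G)
    (hdc : 0 < d + c) : G = 0 := by
  induction d generalizing c G with
  | zero =>
    have hG0 := restrictDiag_eq_zero hG h hdc
    rw [totalDegree_eq_zero_iff_eq_C.mp (Nat.le_zero.mp hG.totalDegree_le)] at hG0 ⊢
    simpa [restrictDiag] using hG0
  | succ d ih =>
    have hren : rename (Fin.cons 0 id) G = 0 :=
      (finSuccEquiv R 1).injective ((restrictDiag_eq_zero hG h hdc).trans (map_zero _).symm)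
    obtain ⟨H, rfl⟩ := X_zero_sub_X_one_dvd hren
    have hW : (X 0 - X 1 : MvPolynomial (Fin 3) R) ≠ 0 :=
      sub_ne_zero.mpr ((X_injective (σ := Fin 3) (R := R)).ne (by decide))
    have hH : H.IsHomogeneous d :=
      ((isHomogeneous_X R 0).sub (isHomogeneous_X R 1)).of_mul_left hW (by rwa [add_comm 1 d])
    have hDH : vectorField halphen H = ((c + 2 : ℕ) : MvPolynomial (Fin 3) R) * X 2 * H := by
      rw [Derivation.leibniz, vectorField_halphen_X_zero_sub_X_one, smul_eq_mul, smul_eq_mul] at h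
      have : (X 0 - X 1) *
          (vectorField halphen H - ((c + 2 : ℕ) : MvPolynomial (Fin 3) R) * X 2 * H) = 0 := by
        push_cast
        linear_combination h
      exact sub_eq_zero.mp ((mul_eq_zero.mp this).resolve_left hW)
    rw [ih hH hDH (by omega), mul_zero]

end Halphen

open Halphen in
/-- Corollary 3: the Halphen equations admit no nonconstant polynomial first
integral. -/
theorem halphen_no_polynomial_first_integral
    (F : MvPolynomial (Fin 3) ℂ)
    (hF : (X 2 * X 1 - X 0 * X 2 - X 0 * X 1) * pderiv 0 F
        + (X 0 * X 2 - X 1 * X 0 - X 1 * X 2) * pderiv 1 F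
        + (X 1 * X 0 - X 2 * X 1 - X 2 * X 0) * pderiv 2 F = 0) :
    ∃ c : ℂ, F = C c := by
  have hD : vectorField halphen F = 0 := (vectorField_halphen_apply F).trans hF
  refine ⟨coeff 0 F, eq_C_of_homogeneousComponent_succ_eq_zero fun n => ?_⟩
  refine eq_zero_of_vectorField_halphen_eq (c := 0) (homogeneousComponent_isHomogeneous (n + 1) F)
    ?_ (by omega)
  rw [← homogeneousComponent_vectorField isHomogeneous_halphen, hD]
  simp
end

section
/- Let J(M) = {z = (z_2,…,z_n) ∈ ℤ_{≥0}^{n-1} : z_2ρ_2 + ⋯ + z_nρ_n = M and z_2 + ⋯ + z_n ≤ M} and suppose J(M) is nonempty, with cardinality m = |J(M)| (which is finite). Then the dimension d of the ℂ-vector space L_M of base functions of degree M satisfies 1 ≤ d ≤ m. -/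
/-!
The distinguished variable `y₁` of the paper is `X 0` here, written `y₀` below.

Write `D₊ = y₀ E + Φ`, where `E = ∑ cᵢ yᵢ ∂ᵢ` (with `c₀ = -1` and `cᵢ = ρᵢ - 1` otherwise) acts on
monomials diagonally, `E y^ν = w(ν) y^ν` with `w(ν) = ∑ cᵢ νᵢ`, and `Φ = ∑ φᵢ ∂ᵢ` with every `φᵢ`
free of `y₀`. So `T = ∂₀ ∘ D₊` is triangular with respect to the power of `y₀`: the coefficient of
`y^ν` in `T P` is `(ν₀ + 1) w(ν)` times that in `P`, plus a combination of coefficients of `P` at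
monomials with a higher power of `y₀`. In degree `M` the resonant monomials, `w(ν) = 0`, are the
`y^z y₀^(M - |z|)` with `z ∈ J(M)`.

Upper bound: an element of `ker T` whose coefficients at the resonant monomials vanish is zero
(look at a monomial of its support with the highest power of `y₀`), so these coefficients embed
`L_M` into `ℂ^J(M)`. Lower bound: for a resonant `ν`, `T` maps the span of `y^ν` and of the
degree-`M` monomials with a lower power of `y₀` into the span of the latter, hence has a nonzero
kernel there.
-/

open MvPolynomial

/-- The right-hand side of system (4.1): `ẏ₁ = -y₁² + φ₁`,
`ẏᵢ = (ρᵢ - 1) y₁ yᵢ + φᵢ` for `i ≠ 1`. -/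
noncomputable def rhs41 (n : ℕ) [NeZero n] (ρ : Fin n → ℂ)
    (φ : Fin n → MvPolynomial (Fin n) ℂ) (i : Fin n) : MvPolynomial (Fin n) ℂ :=
  if i = 0 then -(X 0) ^ 2 + φ 0 else C (ρ i - 1) * X 0 * X i + φ i

/-- The derivation `D₊` associated with system (4.1), as a linear map. -/
noncomputable def dplus41 (n : ℕ) [NeZero n] (ρ : Fin n → ℂ)
    (φ : Fin n → MvPolynomial (Fin n) ℂ) :
    MvPolynomial (Fin n) ℂ →ₗ[ℂ] MvPolynomial (Fin n) ℂ :=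
  ∑ i : Fin n, (LinearMap.mulLeft ℂ (rhs41 n ρ φ i)).comp (pderiv i).toLinearMap

/-- The space `L_M` of base functions of degree `M` of system (4.1):
homogeneous polynomials `P` of degree `M` such that `∂(D₊P)/∂y₁ = 0`. -/
noncomputable def baseSpace41 (n : ℕ) [NeZero n] (ρ : Fin n → ℂ)
    (φ : Fin n → MvPolynomial (Fin n) ℂ) (M : ℕ) :
    Submodule ℂ (MvPolynomial (Fin n) ℂ) :=
  homogeneousSubmodule (Fin n) ℂ M ⊓
    LinearMap.ker ((pderiv (0 : Fin n)).toLinearMap.comp (dplus41 n ρ φ))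

/-- The resonance set `J(M)`: tuples of nonnegative integers `z` (supported away
from the first index) with `z₂ρ₂ + ⋯ + zₙρₙ = M` and `z₂ + ⋯ + zₙ ≤ M`. -/
def resonanceSet (n : ℕ) [NeZero n] (ρ : Fin n → ℂ) (M : ℕ) : Set (Fin n → ℕ) :=
  {z | z 0 = 0 ∧ (∑ i, (z i : ℂ) * ρ i) = (M : ℂ) ∧ (∑ i, z i) ≤ M}

open Finsupp

namespace MvPolynomial

variable {σ R : Type*}

lemma coeff_X_mul_pderiv [CommSemiring R] (i : σ) (p : MvPolynomial σ R) (m : σ →₀ ℕ) :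
    coeff m (X i * pderiv i p) = m i * coeff m p := by
  classical
  induction p using MvPolynomial.induction_on' with
  | monomial a r =>
    rw [X_mul_pderiv_monomial, coeff_smul, coeff_monomial]
    split_ifs with h
    · rw [h, nsmul_eq_mul]
    · rw [smul_zero, mul_zero]
  | add p q hp hq => simp only [mul_add, map_add, coeff_add, hp, hq]

lemma coeff_sum_C_mul_X_mul_pderiv [CommSemiring R] [Fintype σ] (c : σ → R)
    (p : MvPolynomial σ R) (m : σ →₀ ℕ) :
    coeff m (∑ i, C (c i) * (X i * pderiv i p)) = weight c m * coeff m p := by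
  simp only [coeff_sum, coeff_C_mul, coeff_X_mul_pderiv, weight_eq_sum, Finset.sum_mul,
    nsmul_eq_mul]
  exact Finset.sum_congr rfl fun i _ => by ring

lemma coeff_eq_zero_of_pderiv_eq_zero [CommSemiring R] [NoZeroDivisors R] [CharZero R]
    {i : σ} {p : MvPolynomial σ R} (hp : pderiv i p = 0) {m : σ →₀ ℕ} (hm : m i ≠ 0) :
    coeff m p = 0 := by
  have h := congrArg (coeff (m - single i 1)) hp
  rw [coeff_pderiv, coeff_zero, sub_add_single_one_cancel hm] at h
  exact (mul_eq_zero.mp h).resolve_right (Nat.cast_add_one_ne_zero _)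

lemma coeff_mul_pderiv_eq_zero [CommSemiring R] {i j : σ} {f p : MvPolynomial σ R} {k : ℕ}
    (hf : ∀ a : σ →₀ ℕ, a j ≠ 0 → coeff a f = 0) (hp : ∀ b : σ →₀ ℕ, k < b j → coeff b p = 0)
    {m : σ →₀ ℕ} (hm : k < m j) : coeff m (f * pderiv i p) = 0 := by
  classical
  rw [coeff_mul]
  refine Finset.sum_eq_zero fun ab hab => ?_
  rw [Finset.HasAntidiagonal.mem_antidiagonal] at hab
  by_cases ha : ab.1 j = 0
  · have hb : k < (ab.2 + single i 1 : σ →₀ ℕ) j := by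
      have := congrArg (· j) hab
      simp only [Finsupp.add_apply] at this ⊢
      omega
    rw [coeff_pderiv, hp _ hb, zero_mul, mul_zero]
  · rw [hf _ ha, zero_mul]

lemma IsHomogeneous.mul_pderiv [CommSemiring R] {f p : MvPolynomial σ R} {d m : ℕ} (i : σ)
    (hf : f.IsHomogeneous (d + 1)) (hp : p.IsHomogeneous m) :
    (f * pderiv i p).IsHomogeneous (d + m) := by
  rcases m with _ | m
  · rw [totalDegree_eq_zero_iff_eq_C.mp ((totalDegree_zero_iff_isHomogeneous σ).mpr hp),
      pderiv_C, mul_zero]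
    exact isHomogeneous_zero _ _ _
  · convert hf.mul hp.pderiv using 1
    omega

lemma isHomogeneous_of_mem_restrictSupport [CommSemiring R] {s : Set (σ →₀ ℕ)} {m : ℕ}
    {p : MvPolynomial σ R} (hp : p ∈ restrictSupport R s) (hs : s ⊆ {d | d.degree = m}) :
    p.IsHomogeneous m := by
  rw [← mem_homogeneousSubmodule, homogeneousSubmodule_eq_finsupp_supported]
  exact restrictSupport_mono (R := R) hs hp

lemma finrank_restrictSupport [Field R] (s : Set (σ →₀ ℕ)) :
    Module.finrank R (restrictSupport R s) = s.ncard := by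
  rw [Module.finrank_eq_nat_card_basis (basisRestrictSupport R s), Nat.card_coe_set_eq]

end MvPolynomial

lemma Finsupp.degree_erase_add {σ : Type*} (ν : σ →₀ ℕ) (i : σ) :
    (ν.erase i).degree + ν i = ν.degree := by
  rw [← degree_single i (ν i), ← map_add, erase_add_single]

lemma LinearMap.exists_ne_zero_mem_ker_of_finrank_lt {K V V₂ : Type*} [Field K]
    [AddCommGroup V] [Module K V] [AddCommGroup V₂] [Module K V₂] (f : V →ₗ[K] V₂)
    {W : Submodule K V} {U : Submodule K V₂} [FiniteDimensional K W] [FiniteDimensional K U]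
    (hWU : W ≤ U.comap f) (h : Module.finrank K U < Module.finrank K W) :
    ∃ x ∈ W, x ≠ 0 ∧ f x = 0 := by
  let g : W →ₗ[K] U := (f.domRestrict W).codRestrict U fun x => hWU x.2
  obtain ⟨x, hx, hx0⟩ := (Submodule.ne_bot_iff _).mp (g.ker_ne_bot_of_finrank_lt h)
  exact ⟨x, x.2, by simpa using hx0, congrArg Subtype.val hx⟩

section System41

variable {n : ℕ} [NeZero n] (ρ : Fin n → ℂ) (φ : Fin n → MvPolynomial (Fin n) ℂ)

def diagCoeff (i : Fin n) : ℂ := if i = 0 then -1 else ρ i - 1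

lemma rhs41_eq (i : Fin n) : rhs41 n ρ φ i = X 0 * (C (diagCoeff ρ i) * X i) + φ i := by
  unfold rhs41 diagCoeff
  split_ifs with h
  · subst h
    simp only [map_neg, map_one]
    ring
  · ring

lemma dplus41_apply (P : MvPolynomial (Fin n) ℂ) :
    dplus41 n ρ φ P =
      X 0 * ∑ i, C (diagCoeff ρ i) * (X i * pderiv i P) + ∑ i, φ i * pderiv i P := by
  simp only [dplus41, LinearMap.sum_apply, LinearMap.comp_apply, LinearMap.mulLeft_apply,
    Derivation.coeFn_coe, rhs41_eq, add_mul, Finset.sum_add_distrib, Finset.mul_sum, mul_assoc]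

variable {ρ φ}

lemma coeff_pderiv_dplus41 (hφ0 : ∀ i, pderiv (0 : Fin n) (φ i) = 0)
    {P : MvPolynomial (Fin n) ℂ} {ν : Fin n →₀ ℕ}
    (hP : ∀ κ : Fin n →₀ ℕ, ν 0 < κ 0 → coeff κ P = 0) :
    coeff ν (pderiv 0 (dplus41 n ρ φ P)) = weight (diagCoeff ρ) ν * coeff ν P * (ν 0 + 1) := by
  have hφ : ∀ i, coeff (single 0 1 + ν) (φ i * pderiv i P) = 0 := fun i =>
    coeff_mul_pderiv_eq_zero (fun a ha => coeff_eq_zero_of_pderiv_eq_zero (hφ0 i) ha) hP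
      (by simp)
  rw [coeff_pderiv, dplus41_apply, coeff_add, add_comm ν, coeff_X_mul,
    coeff_sum_C_mul_X_mul_pderiv, coeff_sum, Finset.sum_eq_zero fun i _ => hφ i, add_zero]

lemma eq_zero_of_pderiv_dplus41_eq_zero (hφ0 : ∀ i, pderiv (0 : Fin n) (φ i) = 0)
    {P : MvPolynomial (Fin n) ℂ} (hP : pderiv 0 (dplus41 n ρ φ P) = 0)
    (hres : ∀ ν : Fin n →₀ ℕ, weight (diagCoeff ρ) ν = 0 → coeff ν P = 0) : P = 0 := by
  by_contra hne
  obtain ⟨ν, hν, hmax⟩ := P.support.exists_max_image (· 0)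
    (Finset.nonempty_iff_ne_empty.mpr (support_eq_empty.not.mpr hne))
  have hν0 : coeff ν P ≠ 0 := MvPolynomial.mem_support_iff.mp hν
  have hhigher : ∀ κ : Fin n →₀ ℕ, ν 0 < κ 0 → coeff κ P = 0 := fun κ hκ => by
    by_contra h
    exact absurd (hmax κ (MvPolynomial.mem_support_iff.mpr h)) (not_le.mpr hκ)
  have h := congrArg (coeff ν) hP
  rw [coeff_pderiv_dplus41 hφ0 hhigher, coeff_zero] at h
  have hw : weight (diagCoeff ρ) ν = 0 := by
    simpa [hν0, Nat.cast_add_one_ne_zero] using h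
  exact hν0 (hres ν hw)

lemma isHomogeneous_rhs41 (hφhom : ∀ i, (φ i).IsHomogeneous 2) (i : Fin n) :
    (rhs41 n ρ φ i).IsHomogeneous 2 := by
  rw [rhs41_eq]
  exact ((isHomogeneous_X ℂ 0).mul ((isHomogeneous_C_mul_X _ i))).add (hφhom i)

lemma isHomogeneous_pderiv_dplus41 (hφhom : ∀ i, (φ i).IsHomogeneous 2) {M : ℕ}
    {P : MvPolynomial (Fin n) ℂ} (hP : P.IsHomogeneous M) :
    (pderiv 0 (dplus41 n ρ φ P)).IsHomogeneous M := by
  have h : (dplus41 n ρ φ P).IsHomogeneous (1 + M) := by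
    simp only [dplus41, LinearMap.sum_apply, LinearMap.comp_apply, LinearMap.mulLeft_apply,
      Derivation.coeFn_coe]
    exact IsHomogeneous.sum _ _ _ fun i _ => (isHomogeneous_rhs41 hφhom i).mul_pderiv i hP
  simpa using h.pderiv

lemma weight_diagCoeff (ν : Fin n →₀ ℕ) :
    weight (diagCoeff ρ) ν = ∑ i, ((ν.erase 0 : Fin n →₀ ℕ) i : ℂ) * ρ i - ν.degree := by
  have hterm : ∀ i, (ν.erase 0) i • diagCoeff ρ i =
      ((ν.erase 0) i : ℂ) * ρ i - (ν.erase 0) i := by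
    intro i
    rcases eq_or_ne i 0 with rfl | hi
    · simp
    · simp [diagCoeff, hi, mul_sub]
  conv_lhs => rw [← erase_add_single 0 ν]
  rw [map_add, weight_single, weight_eq_sum, Finset.sum_congr rfl fun i _ => hterm i,
    Finset.sum_sub_distrib, ← degree_erase_add ν 0, degree_eq_sum]
  simp only [diagCoeff, if_pos, nsmul_eq_mul, Nat.cast_add, Nat.cast_sum]
  ring

noncomputable def homogenizeExponent (M : ℕ) (z : Fin n → ℕ) : Fin n →₀ ℕ :=
  equivFunOnFinite.symm z + single 0 (M - ∑ i, z i)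

lemma degree_homogenizeExponent {M : ℕ} {z : Fin n → ℕ} (hz : ∑ i, z i ≤ M) :
    (homogenizeExponent M z).degree = M := by
  rw [homogenizeExponent, map_add, degree_single, degree_eq_sum]
  simp only [coe_equivFunOnFinite_symm]
  omega

lemma homogenizeExponent_erase_zero {M : ℕ} {ν : Fin n →₀ ℕ} (hν : ν.degree = M) :
    homogenizeExponent M ⇑(ν.erase 0) = ν := by
  have h := degree_erase_add ν 0
  rw [degree_eq_sum, hν] at h
  rw [homogenizeExponent, equivFunOnFinite_symm_coe, show M - ∑ i, ν.erase 0 i = ν 0 by omega,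
    erase_add_single]

lemma erase_zero_homogenizeExponent {M : ℕ} {z : Fin n → ℕ} (hz : z 0 = 0) :
    ⇑((homogenizeExponent M z).erase 0) = z := by
  ext i
  rcases eq_or_ne i 0 with rfl | hi
  · simp [hz]
  · simp [homogenizeExponent, erase_ne hi, single_eq_of_ne hi]

lemma erase_zero_mem_resonanceSet_iff {M : ℕ} {ν : Fin n →₀ ℕ} (hν : ν.degree = M) :
    ⇑(ν.erase 0) ∈ resonanceSet n ρ M ↔ weight (diagCoeff ρ) ν = 0 := by
  have hle : ∑ i, ν.erase 0 i ≤ M := by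
    have := degree_erase_add ν 0
    rw [degree_eq_sum] at this
    omega
  simp only [resonanceSet, Set.mem_ofPred_eq, erase_same, hle, true_and, and_true,
    weight_diagCoeff, hν, sub_eq_zero]

lemma rank_baseSpace41_le (hφ0 : ∀ i, pderiv (0 : Fin n) (φ i) = 0) {M : ℕ}
    (hfin : (resonanceSet n ρ M).Finite) :
    Module.rank ℂ (baseSpace41 n ρ φ M) ≤ hfin.toFinset.card := by
  let F : baseSpace41 n ρ φ M →ₗ[ℂ] hfin.toFinset → ℂ :=
    LinearMap.pi fun z => (lcoeff ℂ (homogenizeExponent M z)).comp (Submodule.subtype _)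
  have hF : Function.Injective F := by
    refine (injective_iff_map_eq_zero F).mpr fun Q hQ => Subtype.ext ?_
    obtain ⟨hQhom, hQker⟩ := Submodule.mem_inf.mp Q.2
    refine eq_zero_of_pderiv_dplus41_eq_zero hφ0 hQker fun ν hν => ?_
    by_contra hν0
    have hdeg : ν.degree = M := by
      by_contra h
      exact hν0 (hQhom.coeff_eq_zero h)
    have hz := (erase_zero_mem_resonanceSet_iff hdeg).mpr hν
    have hQz := congrFun hQ ⟨_, hfin.mem_toFinset.mpr hz⟩
    exact hν0 (by simpa [F, homogenizeExponent_erase_zero hdeg] using hQz)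
  calc Module.rank ℂ (baseSpace41 n ρ φ M) ≤ Module.rank ℂ (hfin.toFinset → ℂ) :=
        F.rank_le_of_injective hF
    _ = hfin.toFinset.card := by rw [rank_fun', Fintype.card_coe]

lemma pderiv_dplus41_mem_restrictSupport (hφhom : ∀ i, (φ i).IsHomogeneous 2)
    (hφ0 : ∀ i, pderiv (0 : Fin n) (φ i) = 0) {M : ℕ} {ν : Fin n →₀ ℕ} (hν : ν.degree = M)
    (hres : weight (diagCoeff ρ) ν = 0) {P : MvPolynomial (Fin n) ℂ}
    (hP : P ∈ restrictSupport ℂ (insert ν {κ | κ.degree = M ∧ κ 0 < ν 0})) :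
    pderiv 0 (dplus41 n ρ φ P) ∈ restrictSupport ℂ {κ | κ.degree = M ∧ κ 0 < ν 0} := by
  have hsupp : ∀ κ, coeff κ P ≠ 0 → κ = ν ∨ κ.degree = M ∧ κ 0 < ν 0 :=
    fun κ hκ => hP (MvPolynomial.mem_support_iff.mpr hκ)
  have hhom : P.IsHomogeneous M := isHomogeneous_of_mem_restrictSupport hP (by
    rintro κ (rfl | hκ)
    exacts [hν, hκ.1])
  rw [mem_restrictSupport_iff]
  intro κ hκ
  replace hκ := MvPolynomial.mem_support_iff.mp (Finset.mem_coe.mp hκ)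
  refine ⟨by_contra fun h => hκ ((isHomogeneous_pderiv_dplus41 hφhom hhom).coeff_eq_zero h), ?_⟩
  by_contra! hle
  have hhigher : ∀ μ : Fin n →₀ ℕ, κ 0 < μ 0 → coeff μ P = 0 := fun μ hμ => by
    by_contra h
    rcases hsupp μ h with rfl | hμ <;> omega
  apply hκ
  rw [coeff_pderiv_dplus41 hφ0 hhigher]
  by_cases hκP : coeff κ P = 0
  · rw [hκP, mul_zero, zero_mul]
  · rcases hsupp κ hκP with rfl | hκS
    · rw [hres, zero_mul, zero_mul]
    · omega

lemma baseSpace41_ne_bot (hφhom : ∀ i, (φ i).IsHomogeneous 2)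
    (hφ0 : ∀ i, pderiv (0 : Fin n) (φ i) = 0) {M : ℕ} {ν : Fin n →₀ ℕ} (hν : ν.degree = M)
    (hres : weight (diagCoeff ρ) ν = 0) : baseSpace41 n ρ φ M ≠ ⊥ := by
  set S := {κ : Fin n →₀ ℕ | κ.degree = M ∧ κ 0 < ν 0}
  have hS : S.Finite := (finite_of_degree_eq M).subset fun κ hκ => hκ.1
  have : Finite S := hS.to_subtype
  have : Finite (insert ν S : Set _) := (hS.insert ν).to_subtype
  have := Module.Finite.of_basis (basisRestrictSupport ℂ S)
  have := Module.Finite.of_basis (basisRestrictSupport ℂ (insert ν S))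
  have hmaps : restrictSupport ℂ (insert ν S) ≤
      (restrictSupport ℂ S).comap ((pderiv 0).toLinearMap.comp (dplus41 n ρ φ)) :=
    fun P hP => pderiv_dplus41_mem_restrictSupport hφhom hφ0 hν hres hP
  have hfr : Module.finrank ℂ (restrictSupport ℂ S) <
      Module.finrank ℂ (restrictSupport ℂ (insert ν S)) := by
    rw [finrank_restrictSupport, finrank_restrictSupport,
      Set.ncard_insert_of_notMem (fun h => lt_irrefl _ h.2) hS]
    exact Nat.lt_succ_self _
  obtain ⟨P, hPW, hP0, hTP⟩ := LinearMap.exists_ne_zero_mem_ker_of_finrank_lt _ hmaps hfr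
  have hhom : P.IsHomogeneous M := isHomogeneous_of_mem_restrictSupport hPW (by
    rintro κ (rfl | hκ)
    exacts [hν, hκ.1])
  exact (Submodule.ne_bot_iff _).mpr ⟨P, Submodule.mem_inf.mpr ⟨hhom, hTP⟩, hP0⟩

end System41

/-- Theorem 7: if `J(M)` is nonempty, with (finite) cardinality `m`, then the
dimension `d` of the space `L_M` of base functions of degree `M` satisfies
`1 ≤ d ≤ m`. -/
theorem baseSpace_dim_bounds
    (n : ℕ) [NeZero n] (ρ : Fin n → ℂ)
    (φ : Fin n → MvPolynomial (Fin n) ℂ)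
    (hφhom : ∀ i, (φ i).IsHomogeneous 2)
    (hφ0 : ∀ i, pderiv (0 : Fin n) (φ i) = 0)
    (M : ℕ)
    (hfin : (resonanceSet n ρ M).Finite)
    (hne : (resonanceSet n ρ M).Nonempty) :
    1 ≤ Module.rank ℂ (baseSpace41 n ρ φ M) ∧
      Module.rank ℂ (baseSpace41 n ρ φ M) ≤ (hfin.toFinset.card : Cardinal) := by
  obtain ⟨z, hz⟩ := hne
  have hdeg := degree_homogenizeExponent (M := M) hz.2.2
  have hres : weight (diagCoeff ρ) (homogenizeExponent M z) = 0 :=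
    (erase_zero_mem_resonanceSet_iff hdeg).mp (by rwa [erase_zero_homogenizeExponent hz.1])
  refine ⟨?_, rank_baseSpace41_le hφ0 hfin⟩
  rw [Cardinal.one_le_iff_ne_zero, Ne, Submodule.rank_eq_zero]
  exact baseSpace41_ne_bot hφhom hφ0 hdeg hres
end
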